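/- Let s ≥ 1, r_1 < … < r_s positive integers, and let C be a linear [n,k,d]_q code with a partition of {1,…,n} into pairwise disjoint sets S_1,…,S_s, |S_i| = n_i ≥ 1, such that every coordinate in S_i has locality r_i with a repair set contained in S_i. Then for all integers t_1,…,t_s with 1 ≤ t_i ≤ ⌈n_i/(r_i+1)⌉ for every i, one has k ≤ Σ_{i=1}^s t_i r_i + k_opt^{(q)}(n − Σ_{i=1}^s min(n_i, t_i(r_i+1)), d). -/
import Mathlib


open Finset

/-- `C` is a linear `[n,k,d]_q` code over `F`: it has `F`-dimension `k` and its minimum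
Hamming distance (least Hamming weight of a nonzero codeword) equals `d`. -/
def IsLinearCode (F : Type*) [Field F] [DecidableEq F] {n : ℕ}
    (C : Submodule F (Fin n → F)) (k d : ℕ) : Prop :=
  Module.finrank F C = k ∧
    (∀ c ∈ C, c ≠ 0 → d ≤ hammingNorm c) ∧
    ∃ c ∈ C, c ≠ 0 ∧ hammingNorm c = d

/-- Coordinate `i` of the code `C` has locality `r`. -/
def HasLocality (F : Type*) [Field F] {n : ℕ} (C : Submodule F (Fin n → F))
    (i : Fin n) (r : ℕ) : Prop :=
  ∃ R : Finset (Fin n), i ∉ R ∧ R.card ≤ r ∧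
    ∃ lam : Fin n → F, ∀ c ∈ C, c i = ∑ j ∈ R, lam j * c j

/-- Coordinate `i` of the code `C` has locality `r` with a repair set contained in `S`. -/
def HasLocalityIn (F : Type*) [Field F] {n : ℕ} (C : Submodule F (Fin n → F))
    (i : Fin n) (r : ℕ) (S : Finset (Fin n)) : Prop :=
  ∃ R : Finset (Fin n), R ⊆ S ∧ i ∉ R ∧ R.card ≤ r ∧
    ∃ lam : Fin n → F, ∀ c ∈ C, c i = ∑ j ∈ R, lam j * c j

/-- `H(I)`: the `F`-dimension of the image of `C` under the coordinate projection onto `I`. -/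
noncomputable def projDim (F : Type*) [Field F] {n : ℕ}
    (C : Submodule F (Fin n → F)) (I : Finset (Fin n)) : ℕ :=
  Module.finrank F (C.map (LinearMap.funLeft F F (fun i : {x // x ∈ I} => (i : Fin n))))

/-- `k_opt^{(q)}(n,d)`: the largest dimension of a linear code of length `n` over `F`
with minimum Hamming distance at least `d`. -/
noncomputable def kopt (F : Type*) [Field F] [DecidableEq F] (n d : ℕ) : ℕ :=
  sSup {k | ∃ C : Submodule F (Fin n → F), Module.finrank F C = k ∧
    ∀ c ∈ C, c ≠ 0 → d ≤ hammingNorm c}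




/-- A submodule product `p.prod q` is linearly equivalent to `p × q`. -/
def subProdEquiv {R M N : Type*} [Ring R] [AddCommGroup M] [AddCommGroup N]
    [Module R M] [Module R N] (p : Submodule R M) (q : Submodule R N) :
    ↥(p.prod q) ≃ₗ[R] ↥p × ↥q where
  toFun z := (⟨z.1.1, (Submodule.mem_prod.1 z.2).1⟩, ⟨z.1.2, (Submodule.mem_prod.1 z.2).2⟩)
  invFun z := ⟨(z.1.1, z.2.1), Submodule.mem_prod.2 ⟨z.1.2, z.2.2⟩⟩
  left_inv z := by ext <;> rfl
  right_inv z := by ext <;> rfl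
  map_add' _ _ := by ext <;> rfl
  map_smul' _ _ := by ext <;> rfl



section Aux
variable {F : Type*} [Field F] {n : ℕ} (C : Submodule F (Fin n → F))

/-- the coordinate projection map -/
noncomputable def prMap (I : Finset (Fin n)) : (Fin n → F) →ₗ[F] ({x // x ∈ I} → F) :=
  LinearMap.funLeft F F (fun i : {x // x ∈ I} => (i : Fin n))

theorem projDim_def (I : Finset (Fin n)) :
    projDim F C I = Module.finrank F (C.map (prMap (F := F) I)) := rfl

theorem projDim_mono {I J : Finset (Fin n)} (hIJ : I ⊆ J) :
    projDim F C I ≤ projDim F C J := by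
  have hcomp : prMap (F := F) (n := n) I =
      (LinearMap.funLeft F F (fun a : {x // x ∈ I} => (⟨a.1, hIJ a.2⟩ : {x // x ∈ J}))).comp
        (prMap (F := F) J) := by
    rw [prMap, prMap, ← LinearMap.funLeft_comp]
    rfl
  rw [projDim_def, projDim_def, hcomp, Submodule.map_comp]
  exact Submodule.finrank_map_le _ _

theorem projDim_union_le (I J : Finset (Fin n)) :
    projDim F C (I ∪ J) ≤ projDim F C I + projDim F C J := by
  classical
  set U := I ∪ J with hU
  let gI : {x // x ∈ I} → {x // x ∈ U} := fun a => ⟨a.1, mem_union_left _ a.2⟩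
  let gJ : {x // x ∈ J} → {x // x ∈ U} := fun a => ⟨a.1, mem_union_right _ a.2⟩
  let φ : ({x // x ∈ U} → F) →ₗ[F] ({x // x ∈ I} → F) × ({x // x ∈ J} → F) :=
    (LinearMap.funLeft F F gI).prod (LinearMap.funLeft F F gJ)
  have hinj : Function.Injective φ := by
    intro a b hab
    funext u
    rcases mem_union.1 u.2 with h | h
    · have := congrFun (congrArg Prod.fst hab) ⟨u.1, h⟩
      simpa [φ, LinearMap.funLeft_apply, gI] using this
    · have := congrFun (congrArg Prod.snd hab) ⟨u.1, h⟩
      simpa [φ, LinearMap.funLeft_apply, gJ] using this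
  have heq : Module.finrank F (C.map (prMap (F := F) U)) =
      Module.finrank F ((C.map (prMap (F := F) U)).map φ) :=
    (Submodule.equivMapOfInjective φ hinj _).finrank_eq
  have hle : (C.map (prMap (F := F) U)).map φ ≤
      (C.map (prMap (F := F) I)).prod (C.map (prMap (F := F) J)) := by
    rintro x ⟨y, ⟨c, hc, rfl⟩, rfl⟩
    refine Submodule.mem_prod.2 ⟨⟨c, hc, rfl⟩, ⟨c, hc, rfl⟩⟩
  calc projDim F C U = Module.finrank F ((C.map (prMap (F := F) U)).map φ) := by
        rw [projDim_def]; exact heq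
    _ ≤ Module.finrank F ((C.map (prMap (F := F) I)).prod (C.map (prMap (F := F) J))) :=
        Submodule.finrank_mono hle
    _ = projDim F C I + projDim F C J := by
        rw [(subProdEquiv _ _).finrank_eq, Module.finrank_prod, projDim_def, projDim_def]

theorem projDim_singleton_le (x : Fin n) : projDim F C {x} ≤ 1 := by
  refine (Submodule.finrank_le _).trans ?_
  simp [Module.finrank_pi]

theorem projDim_insert_le (x : Fin n) (I : Finset (Fin n)) :
    projDim F C (insert x I) ≤ projDim F C I + 1 := by
  have : insert x I = {x} ∪ I := Finset.insert_eq _ _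
  rw [this]
  calc projDim F C ({x} ∪ I) ≤ projDim F C {x} + projDim F C I := projDim_union_le C _ _
    _ ≤ 1 + projDim F C I := by gcongr; exact projDim_singleton_le C x
    _ = projDim F C I + 1 := by omega

theorem projDim_union_le_card (I J : Finset (Fin n)) :
    projDim F C (I ∪ J) ≤ projDim F C I + J.card := by
  classical
  induction J using Finset.induction with
  | empty => simp
  | @insert a J ha ih =>
    have h1 : I ∪ insert a J = insert a (I ∪ J) := Finset.union_insert _ _ _
    rw [h1]
    calc projDim F C (insert a (I ∪ J)) ≤ projDim F C (I ∪ J) + 1 := projDim_insert_le C _ _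
      _ ≤ projDim F C I + J.card + 1 := Nat.add_le_add_right ih 1
      _ = projDim F C I + (insert a J).card := by rw [card_insert_of_notMem ha, Nat.add_assoc]

theorem projDim_insert_repair {x : Fin n} {I R : Finset (Fin n)} (hRI : R ⊆ I)
    (lam : Fin n → F) (hrep : ∀ c ∈ C, c x = ∑ j ∈ R, lam j * c j) :
    projDim F C (insert x I) ≤ projDim F C I := by
  classical
  let ψ : ({y // y ∈ I} → F) →ₗ[F] ({y // y ∈ insert x I} → F) :=
    LinearMap.pi (fun j => if h : (j : Fin n) ∈ I then LinearMap.proj (⟨j.1, h⟩ : {y // y ∈ I})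
      else ∑ a ∈ R.attach, lam a.1 •
        (LinearMap.proj (⟨a.1, hRI a.2⟩ : {y // y ∈ I}) : ({y // y ∈ I} → F) →ₗ[F] F))
  have hle : C.map (prMap (F := F) (insert x I)) ≤ (C.map (prMap (F := F) I)).map ψ := by
    rintro v ⟨c, hc, rfl⟩
    refine ⟨prMap (F := F) I c, ⟨c, hc, rfl⟩, ?_⟩
    funext j
    simp only [ψ, LinearMap.pi_apply]
    split
    · rfl
    · next h =>
      have hjx : (j : Fin n) = x := by
        rcases Finset.mem_insert.1 j.2 with h' | h'
        · exact h'
        · exact absurd h' h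
      have : prMap (F := F) (insert x I) c j = c x := by
        simp [prMap, LinearMap.funLeft_apply, hjx]
      rw [this, hrep c hc, ← Finset.sum_attach R (fun j => lam j * c j)]
      simp [prMap, LinearMap.funLeft_apply]
  calc projDim F C (insert x I)
      ≤ Module.finrank F ((C.map (prMap (F := F) I)).map ψ) := by
        rw [projDim_def]; exact Submodule.finrank_mono hle
    _ ≤ projDim F C I := Submodule.finrank_map_le _ _

theorem projDim_empty_le : projDim F C (∅ : Finset (Fin n)) ≤ 0 := by
  refine (Submodule.finrank_le _).trans ?_
  simp [Module.finrank_pi]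

theorem projDim_biUnion_le (T : Finset ℕ) (f : ℕ → Finset (Fin n)) :
    projDim F C (T.biUnion f) ≤ ∑ i ∈ T, projDim F C (f i) := by
  classical
  induction T using Finset.induction with
  | empty => simpa using projDim_empty_le C
  | @insert a T ha ih =>
    rw [Finset.biUnion_insert, Finset.sum_insert ha]
    exact (projDim_union_le C _ _).trans (Nat.add_le_add_left ih _)

/-- The key combinatorial construction inside a single locality block. -/
theorem block_construction (T : Finset (Fin n)) (r : ℕ)
    (hloc : ∀ x ∈ T, HasLocalityIn F C x r T) (t : ℕ) :
    ∃ I : Finset (Fin n), I ⊆ T ∧ I.card = min T.card (t * (r + 1)) ∧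
      projDim F C I ≤ t * r := by
  classical
  induction t with
  | zero => exact ⟨∅, Finset.empty_subset _, by simp, by simpa using projDim_empty_le C⟩
  | succ t ih =>
    obtain ⟨I, hIT, hIcard, hIrank⟩ := ih
    by_cases hlt : T.card ≤ t * (r + 1)
    · refine ⟨I, hIT, ?_, ?_⟩
      · rw [hIcard, Nat.min_eq_left hlt, Nat.min_eq_left]
        nlinarith
      · exact hIrank.trans (by nlinarith)
    · push_neg at hlt
      have hIcard' : I.card = t * (r + 1) := by rw [hIcard]; omega
      have hnotsub : ¬ T ⊆ I := by
        intro h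
        have := Finset.card_le_card h
        omega
      obtain ⟨x, hxT, hxI⟩ := Finset.not_subset.1 hnotsub
      obtain ⟨R, hRT, hxR, hRcard, lam, hrep⟩ := hloc x hxT
      set G : Finset (Fin n) := insert x (I ∪ R) with hG
      have hGT : G ⊆ T := by
        rw [hG]
        exact Finset.insert_subset hxT (Finset.union_subset hIT hRT)
      have hIunR : I ∪ R = I ∪ (R \ I) := (Finset.union_sdiff_self_eq_union).symm
      have hGrank : projDim F C G ≤ t * r + (R \ I).card := by
        calc projDim F C G ≤ projDim F C (I ∪ R) :=
              projDim_insert_repair C (Finset.subset_union_right) lam hrep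
          _ = projDim F C (I ∪ (R \ I)) := by rw [hIunR]
          _ ≤ projDim F C I + (R \ I).card := projDim_union_le_card C _ _
          _ ≤ t * r + (R \ I).card := Nat.add_le_add_right hIrank _
      have hxIR : x ∉ I ∪ R := by simp [hxI, hxR]
      have hGcard : G.card = t * (r + 1) + 1 + (R \ I).card := by
        rw [hG, Finset.card_insert_of_notMem hxIR, hIunR,
          Finset.card_union_of_disjoint (Finset.disjoint_sdiff), hIcard']
        omega
      have hRIr : (R \ I).card ≤ r := (Finset.card_le_card (Finset.sdiff_subset)).trans hRcard
      set c : ℕ := min T.card ((t + 1) * (r + 1)) with hc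
      have hcT : c ≤ T.card := Nat.min_le_left _ _
      have hGc : G.card ≤ c := by
        refine le_min (Finset.card_le_card hGT) ?_
        rw [hGcard]
        nlinarith
      obtain ⟨J, hGJ, hJT, hJcard⟩ := Finset.exists_subsuperset_card_eq hGT hGc hcT
      refine ⟨J, hJT, by rw [hJcard], ?_⟩
      have hJG : J = G ∪ (J \ G) := by rw [Finset.union_sdiff_of_subset hGJ]
      have : projDim F C J ≤ projDim F C G + (J \ G).card := by
        conv_lhs => rw [hJG]
        exact projDim_union_le_card C _ _
      have hJGcard : (J \ G).card = c - G.card := by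
        rw [Finset.card_sdiff_of_subset hGJ, hJcard]
      have hcle : c ≤ (t + 1) * (r + 1) := Nat.min_le_right _ _
      have e1 : (t + 1) * (r + 1) = t * (r + 1) + r + 1 := by ring
      have e2 : (t + 1) * r = t * r + r := by ring
      omega

end Aux

section Short
variable {F : Type*} [Field F] [DecidableEq F] {n : ℕ}

theorem kopt_bddAbove (m d : ℕ) :
    BddAbove {k | ∃ C : Submodule F (Fin m → F), Module.finrank F C = k ∧
      ∀ c ∈ C, c ≠ 0 → d ≤ hammingNorm c} := by
  refine ⟨m, fun k hk => ?_⟩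
  obtain ⟨C, hC, -⟩ := hk
  rw [← hC]
  refine (Submodule.finrank_le _).trans ?_
  simp [Module.finrank_pi]

theorem le_kopt {m d k : ℕ} (C : Submodule F (Fin m → F)) (hk : Module.finrank F C = k)
    (hd : ∀ c ∈ C, c ≠ 0 → d ≤ hammingNorm c) : k ≤ kopt F m d :=
  le_csSup (kopt_bddAbove m d) ⟨C, hk, hd⟩

set_option synthInstance.maxHeartbeats 1000000 in
set_option maxHeartbeats 1000000 in
/-- Shortening bound. -/
theorem shortening_bound (C : Submodule F (Fin n → F)) (d : ℕ)
    (hd : ∀ c ∈ C, c ≠ 0 → d ≤ hammingNorm c) (I : Finset (Fin n)) :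
    Module.finrank F C ≤ projDim F C I + kopt F (n - I.card) d := by
  classical
  set K : Finset (Fin n) := Iᶜ with hKdef
  have hK : K.card = n - I.card := by
    simp [hKdef, Finset.card_compl]
  set m := n - I.card with hm
  let e : Fin m ≃ {x // x ∈ K} := ((K.equivFin).trans (finCongr hK)).symm
  let jmap : Fin m → Fin n := fun a => ((e a : {x // x ∈ K}) : Fin n)
  let g := (prMap (F := F) I).domRestrict C
  have hrn : Module.finrank F C =
      Module.finrank F (LinearMap.range g) + Module.finrank F (LinearMap.ker g) :=
    (LinearMap.finrank_range_add_finrank_ker g).symm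
  have hrange : Module.finrank F (LinearMap.range g) = projDim F C I := by
    have hrg : LinearMap.range g = C.map (prMap (F := F) I) :=
      LinearMap.range_domRestrict C (prMap (F := F) I)
    rw [projDim_def, hrg]
  -- for elements of the kernel, coordinates in I vanish
  have hker0 : ∀ z : LinearMap.ker g, ∀ i ∈ I, ((z : C) : Fin n → F) i = 0 := by
    intro z i hi
    have hz : prMap (F := F) I ((z : C) : Fin n → F) = 0 := z.2
    exact congrFun hz ⟨i, hi⟩
  let h : LinearMap.ker g →ₗ[F] (Fin m → F) :=
    (LinearMap.funLeft F F jmap).comp (C.subtype.comp (LinearMap.ker g).subtype)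
  have happly : ∀ (z : LinearMap.ker g) (a : Fin m), h z a = ((z : C) : Fin n → F) (jmap a) :=
    fun z a => rfl
  have hinj : Function.Injective h := by
    intro z1 z2 hz
    have hz' : ∀ a : Fin m, ((z1 : C) : Fin n → F) (jmap a) = ((z2 : C) : Fin n → F) (jmap a) :=
      fun a => congrFun hz a
    have : ((z1 : C) : Fin n → F) = ((z2 : C) : Fin n → F) := by
      funext i
      by_cases hi : i ∈ I
      · rw [hker0 z1 i hi, hker0 z2 i hi]
      · have hiK : i ∈ K := by simp [hKdef, hi]
        have := hz' (e.symm ⟨i, hiK⟩)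
        simpa [jmap] using this
    exact Subtype.ext (Subtype.ext this)
  have hdim : Module.finrank F (LinearMap.ker g) = Module.finrank F (LinearMap.range h) :=
    (LinearMap.finrank_range_of_inj hinj).symm
  have hdist : ∀ v ∈ LinearMap.range h, v ≠ 0 → d ≤ hammingNorm v := by
    rintro v ⟨z, rfl⟩ hv0
    set c : Fin n → F := ((z : C) : Fin n → F) with hcdef
    have hc0 : c ≠ 0 := by
      intro h0
      apply hv0
      funext a
      exact congrFun h0 (jmap a)
    have hcC : c ∈ C := (z : C).2
    refine (hd c hcC hc0).trans ?_
    -- hammingNorm c ≤ hammingNorm (h z)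
    unfold hammingNorm
    refine Finset.card_le_card_of_surjOn jmap ?_
    intro i hi
    simp only [Finset.coe_filter, Set.mem_setOf_eq, Finset.mem_univ, true_and] at hi
    have hiI : i ∉ I := fun hiI => hi (hker0 z i hiI)
    have hiK : i ∈ K := by simp [hKdef, hiI]
    refine ⟨e.symm ⟨i, hiK⟩, ?_, ?_⟩
    · simp only [Finset.coe_filter, Set.mem_setOf_eq, Finset.mem_univ, true_and]
      rw [happly]
      simpa [jmap] using hi
    · simp [jmap]
  have : Module.finrank F (LinearMap.ker g) ≤ kopt F m d :=
    hdim.le.trans (le_kopt _ rfl hdist)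
  omega

end Short


theorem stmt11 {F : Type*} [Field F] [Fintype F] [DecidableEq F]
    {n k d s : ℕ} (hs : 1 ≤ s)
    (r nn : ℕ → ℕ)
    (hrpos : ∀ i < s, 0 < r i)
    (hrmono : ∀ i j, i < j → j < s → r i < r j)
    (hnn : ∀ i < s, 1 ≤ nn i)
    (C : Submodule F (Fin n → F)) (hC : IsLinearCode F C k d)
    (S : ℕ → Finset (Fin n))
    (hdisj : ∀ i j, i < j → j < s → Disjoint (S i) (S j))
    (hcover : (Finset.range s).biUnion S = Finset.univ)
    (hcard : ∀ i < s, (S i).card = nn i)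
    (hloc : ∀ i < s, ∀ x ∈ S i, HasLocalityIn F C x (r i) (S i)) :
    ∀ t : ℕ → ℕ, (∀ i < s, 1 ≤ t i) →
      (∀ i < s, (t i : ℤ) ≤ ⌈(nn i : ℚ) / ((r i : ℚ) + 1)⌉) →
      k ≤ (∑ i ∈ Finset.range s, t i * r i) +
        kopt F (n - ∑ i ∈ Finset.range s, min (nn i) (t i * (r i + 1))) d := by
  intro t ht1 ht2
  classical
  obtain ⟨hkC, hdC, -⟩ := hC
  have hchoice : ∀ i : ℕ, ∃ I : Finset (Fin n), I ⊆ S i ∧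
      (i < s → (I.card = min (nn i) (t i * (r i + 1)) ∧ projDim F C I ≤ t i * r i)) := by
    intro i
    by_cases hi : i < s
    · obtain ⟨I, hIT, hIcard, hIrank⟩ := block_construction C (S i) (r i) (hloc i hi) (t i)
      exact ⟨I, hIT, fun _ => ⟨by rw [hIcard, hcard i hi], hIrank⟩⟩
    · exact ⟨∅, Finset.empty_subset _, fun h => absurd h hi⟩
  choose II hIIsub hIIspec using hchoice
  set I : Finset (Fin n) := (Finset.range s).biUnion II with hI
  have hdisj' : ∀ i ∈ Finset.range s, ∀ j ∈ Finset.range s, i ≠ j →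
      Disjoint (II i) (II j) := by
    intro i hi j hj hij
    rcases lt_or_gt_of_ne hij with h | h
    · exact Finset.disjoint_of_subset_left (hIIsub i)
        (Finset.disjoint_of_subset_right (hIIsub j) (hdisj i j h (Finset.mem_range.1 hj)))
    · exact (Finset.disjoint_of_subset_left (hIIsub j)
        (Finset.disjoint_of_subset_right (hIIsub i) (hdisj j i h (Finset.mem_range.1 hi)))).symm
  have hIcard : I.card = ∑ i ∈ Finset.range s, min (nn i) (t i * (r i + 1)) := by
    rw [hI, Finset.card_biUnion hdisj']
    exact Finset.sum_congr rfl (fun i hi => (hIIspec i (Finset.mem_range.1 hi)).1)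
  have hIrank : projDim F C I ≤ ∑ i ∈ Finset.range s, t i * r i := by
    refine (projDim_biUnion_le C _ _).trans ?_
    exact Finset.sum_le_sum (fun i hi => (hIIspec i (Finset.mem_range.1 hi)).2)
  have hshort := shortening_bound C d hdC I
  rw [hkC] at hshort
  rw [← hIcard]
  omega
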